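/- arXiv:2503.06722 — 3 statements merged into one kernel-verified Lean document; each statement's English description precedes it below -/
import Mathlib

section
/- If G is an undirected graph containing no 3-cycles and no 4-cycles, then EMH_{k,k}(G) = 0 for every k ≥ 2. -/
open scoped Classical

/-- Length of a tuple of vertices: sum of consecutive path-metric distances. -/
noncomputable def tlen {V : Type} (G : SimpleGraph V) {k : ℕ} (x : Fin (k + 1) → V) : ℕ :=
  ∑ i : Fin k, G.dist (x i.castSucc) (x i.succ)

/-- Generators of the (k,ℓ) eulerian magnitude chain group: tuples of k+1 pairwise distinct
vertices, consecutive ones at finite distance, of total length ℓ. -/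
def emcGen {V : Type} (G : SimpleGraph V) (k ℓ : ℕ) : Set (Fin (k + 1) → V) :=
  {x | Function.Injective x ∧ (∀ i : Fin k, G.Reachable (x i.castSucc) (x i.succ)) ∧
    tlen G x = ℓ}

/-- The (k,ℓ) eulerian magnitude chain group: free `ℤ`-module on `emcGen G k ℓ`. -/
abbrev EMC {V : Type} (G : SimpleGraph V) (k ℓ : ℕ) : Type :=
  emcGen G k ℓ →₀ ℤ

/-- The `i`-th face: delete the `i`-th vertex if the result is again a generator
(in particular, length is preserved), and `0` otherwise. -/
noncomputable def emcFace {V : Type} (G : SimpleGraph V) (k ℓ : ℕ) (i : Fin (k + 2))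
    (x : emcGen G (k + 1) ℓ) : EMC G k ℓ :=
  if h : ((x : Fin (k + 2) → V) ∘ i.succAbove) ∈ emcGen G k ℓ then
    Finsupp.single ⟨_, h⟩ 1 else 0

/-- The eulerian magnitude differential: alternating sum of interior-vertex deletions. -/
noncomputable def emcD {V : Type} (G : SimpleGraph V) (k ℓ : ℕ) :
    EMC G (k + 1) ℓ →ₗ[ℤ] EMC G k ℓ :=
  Finsupp.lift (EMC G k ℓ) ℤ (emcGen G (k + 1) ℓ) fun x =>
    ∑ i : Fin (k + 2),
      if i = 0 ∨ i = Fin.last (k + 1) then 0 else ((-1 : ℤ) ^ (i : ℕ)) • emcFace G k ℓ i x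

/-- Cycles of the eulerian magnitude chain complex in degree `k`. -/
noncomputable def emcCycles {V : Type} (G : SimpleGraph V) (k ℓ : ℕ) :
    Submodule ℤ (EMC G k ℓ) :=
  match k with
  | 0 => ⊤
  | k + 1 => LinearMap.ker (emcD G k ℓ)

/-- Eulerian magnitude homology in bidegree (k,ℓ): cycles modulo boundaries. -/
noncomputable abbrev EMH {V : Type} (G : SimpleGraph V) (k ℓ : ℕ) :=
  emcCycles G k ℓ ⧸
    Submodule.comap (emcCycles G k ℓ).subtype (LinearMap.range (emcD G k ℓ))

section Aux

variable {V : Type} {G : SimpleGraph V}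

lemma my_succAbove_val {m : ℕ} (i : Fin (m + 1)) (j : Fin m) :
    ((i.succAbove j : Fin (m + 1)) : ℕ) =
      if (j : ℕ) < (i : ℕ) then (j : ℕ) else (j : ℕ) + 1 := by
  rcases lt_or_ge (j.castSucc) i with h | h
  · rw [Fin.succAbove_of_castSucc_lt _ _ h, if_pos (by simpa [Fin.lt_def] using h)]
    rfl
  · rw [Fin.succAbove_of_le_castSucc _ _ h, if_neg (by simp [Fin.le_def] at h; omega)]
    rfl

lemma gen_dist_one {k : ℕ} {x : Fin (k + 1) → V} (hx : x ∈ emcGen G k k) (i : Fin k) :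
    G.dist (x i.castSucc) (x i.succ) = 1 := by
  obtain ⟨hinj, hreach, hlen⟩ := hx
  have hpos : ∀ j : Fin k, 1 ≤ G.dist (x j.castSucc) (x j.succ) := by
    intro j
    refine (hreach j).pos_dist_of_ne fun h => ?_
    have := hinj h
    have h2 := congrArg Fin.val this
    simp [Fin.coe_castSucc, Fin.val_succ] at h2
  by_contra hne
  have hlt : (∑ _j : Fin k, (1 : ℕ)) < ∑ j : Fin k, G.dist (x j.castSucc) (x j.succ) :=
    Finset.sum_lt_sum (fun j _ => hpos j)
      ⟨i, Finset.mem_univ i, by have := hpos i; omega⟩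
  unfold tlen at hlen
  simp only [Finset.sum_const, Finset.card_univ, Fintype.card_fin, smul_eq_mul, mul_one] at hlt
  omega

lemma gen_adj {k : ℕ} {x : Fin (k + 1) → V} (hx : x ∈ emcGen G k k)
    {a b : Fin (k + 1)} (hab : (b : ℕ) = (a : ℕ) + 1) : G.Adj (x a) (x b) := by
  have ha : (a : ℕ) < k := by have := b.is_lt; omega
  have h1 : a = (⟨(a : ℕ), ha⟩ : Fin k).castSucc := by ext; rfl
  have h2 : b = (⟨(a : ℕ), ha⟩ : Fin k).succ := by ext; simp [hab]
  rw [h1, h2, ← SimpleGraph.dist_eq_one_iff_adj]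
  exact gen_dist_one hx _

lemma gen_dist_two (h3 : ∀ a b c : V, G.Adj a b → G.Adj b c → G.Adj c a → False)
    {k : ℕ} {x : Fin (k + 1) → V} (hx : x ∈ emcGen G k k)
    {a b : Fin (k + 1)} (hab : (b : ℕ) = (a : ℕ) + 2) : G.dist (x a) (x b) = 2 := by
  have hmid : (a : ℕ) + 1 < k + 1 := by have := b.is_lt; omega
  set mid : Fin (k + 1) := ⟨(a : ℕ) + 1, hmid⟩ with hmiddef
  have h1 : G.Adj (x a) (x mid) := gen_adj hx rfl
  have h2 : G.Adj (x mid) (x b) := gen_adj hx (by simp [hmiddef, hab])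
  have hne : x a ≠ x b := by
    intro h
    have := congrArg Fin.val (hx.1 h)
    omega
  have hnadj : ¬ G.Adj (x a) (x b) := fun h => h3 _ _ _ h1 h2 h.symm
  have hle : G.dist (x a) (x b) ≤ 2 := by
    have := SimpleGraph.dist_le (h1.toWalk.append h2.toWalk)
    simpa using this
  have hpos : 0 < G.dist (x a) (x b) :=
    (h1.reachable.trans h2.reachable).pos_dist_of_ne hne
  have hno : G.dist (x a) (x b) ≠ 1 := fun h =>
    hnadj (SimpleGraph.dist_eq_one_iff_adj.mp h)
  omega

lemma face_dist (h3 : ∀ a b c : V, G.Adj a b → G.Adj b c → G.Adj c a → False)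
    {m : ℕ} {x : Fin (m + 2) → V} (hx : x ∈ emcGen G (m + 1) (m + 1))
    (i : Fin (m + 2)) (hi1 : 1 ≤ (i : ℕ)) (hi2 : (i : ℕ) ≤ m) (j : Fin m) :
    G.dist ((x ∘ i.succAbove) j.castSucc) ((x ∘ i.succAbove) j.succ) =
      if (j : ℕ) + 1 = (i : ℕ) then 2 else 1 := by
  have hva := my_succAbove_val i j.castSucc
  have hvb := my_succAbove_val i j.succ
  simp only [Fin.coe_castSucc, Fin.val_succ] at hva hvb
  by_cases h : (j : ℕ) + 1 = (i : ℕ)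
  · rw [if_pos h]
    exact gen_dist_two h3 hx (a := i.succAbove j.castSucc) (b := i.succAbove j.succ)
      (by rw [hva, hvb]; split_ifs <;> omega)
  · rw [if_neg h, SimpleGraph.dist_eq_one_iff_adj]
    exact gen_adj hx (a := i.succAbove j.castSucc) (b := i.succAbove j.succ)
      (by rw [hva, hvb]; split_ifs <;> omega)

lemma face_mem (h3 : ∀ a b c : V, G.Adj a b → G.Adj b c → G.Adj c a → False)
    {m : ℕ} {x : Fin (m + 2) → V} (hx : x ∈ emcGen G (m + 1) (m + 1))
    (i : Fin (m + 2)) (hi1 : 1 ≤ (i : ℕ)) (hi2 : (i : ℕ) ≤ m) :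
    (x ∘ i.succAbove) ∈ emcGen G m (m + 1) := by
  refine ⟨hx.1.comp Fin.succAbove_right_injective, ?_, ?_⟩
  · intro j
    have hd := face_dist h3 hx i hi1 hi2 j
    by_contra hr
    rw [SimpleGraph.dist_eq_zero_of_not_reachable hr] at hd
    split_ifs at hd <;> omega
  · unfold tlen
    have hj0 : (i : ℕ) - 1 < m := by omega
    set j0 : Fin m := ⟨(i : ℕ) - 1, hj0⟩ with hj0def
    have hstep : ∀ j : Fin m,
        G.dist ((x ∘ i.succAbove) j.castSucc) ((x ∘ i.succAbove) j.succ) =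
          1 + if j = j0 then 1 else 0 := by
      intro j
      rw [face_dist h3 hx i hi1 hi2 j]
      have hiff : ((j : ℕ) + 1 = (i : ℕ)) ↔ j = j0 := by
        rw [Fin.ext_iff]; simp [hj0def]; omega
      split_ifs with h1 h2 h2
      · rfl
      · exact absurd (hiff.mp h1) h2
      · exact absurd (hiff.mpr h2) h1
      · rfl
    rw [Finset.sum_congr rfl fun j _ => hstep j, Finset.sum_add_distrib,
      Finset.sum_const, Finset.sum_ite_eq' Finset.univ j0 fun _ => (1 : ℕ)]
    simp

lemma face_eq_unique (h3 : ∀ a b c : V, G.Adj a b → G.Adj b c → G.Adj c a → False)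
    (h4 : ∀ a b c d : V, a ≠ c → b ≠ d →
      G.Adj a b → G.Adj b c → G.Adj c d → G.Adj d a → False)
    {m : ℕ} {x y : Fin (m + 2) → V}
    (hx : x ∈ emcGen G (m + 1) (m + 1)) (hy : y ∈ emcGen G (m + 1) (m + 1))
    (hm : 1 ≤ m) (i : Fin (m + 2)) (hi1 : 1 ≤ (i : ℕ)) (hi2 : (i : ℕ) ≤ m)
    (heq : y ∘ i.succAbove = x ∘ (1 : Fin (m + 2)).succAbove) :
    i = 1 ∧ y = x := by
  have hv1 : ((1 : Fin (m + 2)) : ℕ) = 1 := rfl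
  have hi : i = 1 := by
    by_contra hne
    have hival : (i : ℕ) ≠ 1 := fun h => hne (by ext; rw [h, hv1])
    set j0 : Fin m := ⟨0, hm⟩ with hj0def
    have d1 := face_dist h3 hx 1 (by rw [hv1]) (by rw [hv1]; omega) j0
    have d2 := face_dist h3 hy i hi1 hi2 j0
    rw [heq] at d2
    rw [d1] at d2
    simp only [hj0def, hv1] at d1 d2
    split_ifs at d2 <;> omega
  subst hi
  refine ⟨rfl, ?_⟩
  have hagree : ∀ a : Fin (m + 2), a ≠ 1 → y a = x a := by
    intro a ha
    have haval : (a : ℕ) ≠ 1 := fun h => ha (by ext; rw [h, hv1])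
    by_cases h0 : (a : ℕ) = 0
    · have hkey : (1 : Fin (m + 2)).succAbove ⟨0, by omega⟩ = a := by
        have hv := my_succAbove_val (1 : Fin (m + 2)) (⟨0, by omega⟩ : Fin (m + 1))
        ext
        rw [hv]
        split_ifs with hcond
        · simp <;> omega
        · exfalso
          simp [hv1] at hcond
      rw [← hkey]
      exact congrFun heq _
    · have hlt : (a : ℕ) - 1 < m + 1 := by have := a.is_lt; omega
      have hkey : (1 : Fin (m + 2)).succAbove ⟨(a : ℕ) - 1, hlt⟩ = a := by
        have hv := my_succAbove_val (1 : Fin (m + 2)) (⟨(a : ℕ) - 1, hlt⟩ : Fin (m + 1))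
        ext
        rw [hv]
        split_ifs with hcond
        · exfalso
          simp [hv1] at hcond
          omega
        · simp <;> omega
      rw [← hkey]
      exact congrFun heq _
  have h2lt : (2 : ℕ) < m + 2 := by omega
  have h0lt : (0 : ℕ) < m + 2 := by omega
  have hyp0 : y ⟨0, h0lt⟩ = x ⟨0, h0lt⟩ :=
    hagree _ (fun h => by
      have h' : (0 : ℕ) = ((1 : Fin (m + 2)) : ℕ) := congrArg Fin.val h
      rw [hv1] at h'
      exact absurd h' (by omega))
  have hyp2 : y ⟨2, h2lt⟩ = x ⟨2, h2lt⟩ :=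
    hagree _ (fun h => by
      have h' : (2 : ℕ) = ((1 : Fin (m + 2)) : ℕ) := congrArg Fin.val h
      rw [hv1] at h'
      exact absurd h' (by omega))
  have hy1 : y 1 = x 1 := by
    by_contra hne
    have hx01 : G.Adj (x ⟨0, h0lt⟩) (x 1) := gen_adj hx (by simp [hv1])
    have hx12 : G.Adj (x 1) (x ⟨2, h2lt⟩) := gen_adj hx (by simp [hv1])
    have hy01 : G.Adj (y ⟨0, h0lt⟩) (y 1) := gen_adj hy (by simp [hv1])
    have hy12 : G.Adj (y 1) (y ⟨2, h2lt⟩) := gen_adj hy (by simp [hv1])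
    rw [hyp0] at hy01
    rw [hyp2] at hy12
    have hne02 : x ⟨0, h0lt⟩ ≠ x ⟨2, h2lt⟩ := by
      intro h
      have := congrArg Fin.val (hx.1 h)
      simp at this
    exact h4 (x ⟨0, h0lt⟩) (x 1) (x ⟨2, h2lt⟩) (y 1) hne02 (fun h => hne h.symm)
      hx01 hx12 hy12.symm hy01.symm
  funext a
  by_cases ha : a = 1
  · rw [ha]; exact hy1
  · exact hagree a ha

lemma D_coeff (h3 : ∀ a b c : V, G.Adj a b → G.Adj b c → G.Adj c a → False)
    (h4 : ∀ a b c d : V, a ≠ c → b ≠ d →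
      G.Adj a b → G.Adj b c → G.Adj c d → G.Adj d a → False)
    {m : ℕ} (hm : 1 ≤ m) (x y : emcGen G (m + 1) (m + 1))
    (f : emcGen G m (m + 1))
    (hf : (f : Fin (m + 1) → V) =
      ((x : Fin (m + 2) → V) ∘ (1 : Fin (m + 2)).succAbove)) :
    (∑ i : Fin (m + 2), if i = 0 ∨ i = Fin.last (m + 1) then 0
        else ((-1 : ℤ) ^ (i : ℕ)) • emcFace G m (m + 1) i y) f
      = if y = x then -1 else 0 := by
  have hv1 : ((1 : Fin (m + 2)) : ℕ) = 1 := rfl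
  have hinterior : ∀ i : Fin (m + 2), ¬(i = 0 ∨ i = Fin.last (m + 1)) →
      1 ≤ (i : ℕ) ∧ (i : ℕ) ≤ m := by
    intro i hi
    push_neg at hi
    obtain ⟨hi0, hil⟩ := hi
    have h1 : (i : ℕ) ≠ 0 := fun h => hi0 (by ext; simpa using h)
    have h2 : (i : ℕ) ≠ m + 1 := fun h => hil (by ext; simpa using h)
    have := i.is_lt
    omega
  have hzero : ∀ i : Fin (m + 2), ¬(i = 0 ∨ i = Fin.last (m + 1)) →
      ∀ (h : ((y : Fin (m + 2) → V) ∘ i.succAbove) ∈ emcGen G m (m + 1)),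
      (⟨_, h⟩ : emcGen G m (m + 1)) = f → i = 1 ∧ y = x := by
    intro i hi h hcontra
    obtain ⟨hi1, hi2⟩ := hinterior i hi
    have heq : (y : Fin (m + 2) → V) ∘ i.succAbove =
        (x : Fin (m + 2) → V) ∘ (1 : Fin (m + 2)).succAbove := by
      rw [← hf]; exact congrArg Subtype.val hcontra
    obtain ⟨hia, hyx⟩ := face_eq_unique h3 h4 x.2 y.2 hm i hi1 hi2 heq
    exact ⟨hia, Subtype.ext hyx⟩
  rw [Finsupp.finset_sum_apply]
  by_cases hyx : y = x
  · subst hyx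
    rw [if_pos rfl]
    rw [Finset.sum_eq_single (1 : Fin (m + 2))]
    · have h1 : ¬((1 : Fin (m + 2)) = 0 ∨ (1 : Fin (m + 2)) = Fin.last (m + 1)) := by
        rintro (h | h) <;> (have := congrArg Fin.val h; simp [hv1, Fin.val_last] at this <;> omega)
      have hmem : ((y : Fin (m + 2) → V) ∘ (1 : Fin (m + 2)).succAbove)
          ∈ emcGen G m (m + 1) :=
        face_mem h3 y.2 1 (by simp [hv1]) (by simp [hv1] <;> omega)
      rw [if_neg h1, Finsupp.smul_apply, emcFace, dif_pos hmem,
        Finsupp.single_apply, if_pos (Subtype.ext (by rw [hf]))]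
      simp [hv1]
    · intro i _ hne
      by_cases hb : i = 0 ∨ i = Fin.last (m + 1)
      · rw [if_pos hb]; rfl
      · rw [if_neg hb, Finsupp.smul_apply, emcFace]
        split
        · next h =>
            rw [Finsupp.single_apply, if_neg, smul_zero]
            intro hcontra
            exact hne ((hzero i hb h hcontra).1)
        · simp
    · intro h; exact absurd (Finset.mem_univ _) h
  · rw [if_neg hyx]
    apply Finset.sum_eq_zero
    intro i _
    by_cases hb : i = 0 ∨ i = Fin.last (m + 1)
    · rw [if_pos hb]; rfl
    · rw [if_neg hb, Finsupp.smul_apply, emcFace]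
      split
      · next h =>
          rw [Finsupp.single_apply, if_neg, smul_zero]
          intro hcontra
          exact hyx ((hzero i hb h hcontra).2)
      · simp

end Aux

/-- if `G` has no 3-cycles and no 4-cycles, then `EMH_{k,k}(G) = 0`
for every `k ≥ 2`. -/
theorem emh_diag_eq_zero_of_no_short_cycles {V : Type} [Fintype V] (G : SimpleGraph V)
    (h3 : ∀ a b c : V, G.Adj a b → G.Adj b c → G.Adj c a → False)
    (h4 : ∀ a b c d : V, a ≠ c → b ≠ d →
      G.Adj a b → G.Adj b c → G.Adj c d → G.Adj d a → False)
    (k : ℕ) (hk : 2 ≤ k) : Subsingleton (EMH G k k) := by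
  obtain ⟨n, rfl⟩ : ∃ n, k = n + 2 := ⟨k - 2, by omega⟩
  have key : ∀ c : EMC G (n + 2) (n + 2), emcD G (n + 1) (n + 2) c = 0 → c = 0 := by
    intro c hc
    ext x
    have hm : 1 ≤ n + 1 := by omega
    have hface : (((x : Fin (n + 3) → V)) ∘ (1 : Fin (n + 3)).succAbove)
        ∈ emcGen G (n + 1) (n + 2) :=
      face_mem (m := n + 1) h3 x.2 1 (by norm_num) (by norm_num)
    set f : emcGen G (n + 1) (n + 2) := ⟨_, hface⟩ with hfdef
    have h0 : (emcD G (n + 1) (n + 2)) c f = 0 := by rw [hc]; rfl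
    rw [emcD, Finsupp.lift_apply, Finsupp.sum_apply] at h0
    have h1 : (c.sum fun y a => if y = x then -a else 0) = 0 := by
      refine Eq.trans (Finsupp.sum_congr fun y _ => ?_) h0
      rw [Finsupp.smul_apply, D_coeff (m := n + 1) h3 h4 hm x y f rfl]
      split_ifs <;> simp
    have h2 : (c.sum fun y a => if y = x then -a else 0) = -(c x) := by
      rw [Finsupp.sum]
      by_cases hs : x ∈ c.support
      · rw [Finset.sum_eq_single x (fun y _ hne => if_neg hne) (fun h => absurd hs h),
          if_pos rfl]
      · rw [Finset.sum_eq_zero, Finsupp.notMem_support_iff.mp hs, neg_zero]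
        intro y hy
        rw [if_neg]
        rintro rfl
        exact hs hy
    have : -(c x) = 0 := h2.symm.trans h1
    exact neg_eq_zero.mp this
  have hsub : Subsingleton (emcCycles G (n + 2) (n + 2)) := by
    constructor
    rintro ⟨a, ha⟩ ⟨b, hb⟩
    have ha' : emcD G (n + 1) (n + 2) a = 0 := ha
    have hb' : emcD G (n + 1) (n + 2) b = 0 := hb
    exact Subtype.ext ((key a ha').trans (key b hb').symm)
  refine ⟨fun a b => ?_⟩
  obtain ⟨a, rfl⟩ := Submodule.Quotient.mk_surjective _ a
  obtain ⟨b, rfl⟩ := Submodule.Quotient.mk_surjective _ b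
  rw [Subsingleton.elim a b]
end

section
/- Let G be a finite connected undirected graph on n+1 > 2 vertices which is not complete. Then there exists a tuple (x_0,...,x_n) consisting of all n+1 vertices of G, of length ℓ > n, such that for every interior index i one has d_G(x_{i-1},x_{i+1}) < d_G(x_{i-1},x_i) + d_G(x_i,x_{i+1}); consequently this tuple is a nonzero cycle in EMC_{n,ℓ}(G) and EMH_{n,ℓ}(G) ≠ 0 for some ℓ > n. -/
open scoped Classical

noncomputable def gnext {V : Type} [Fintype V] (G : SimpleGraph V) (v : V) (S : Finset V) : V :=
  if h : S.Nonempty then (S.exists_max_image (G.dist v) h).choose else v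

lemma gnext_mem {V : Type} [Fintype V] (G : SimpleGraph V) {v : V} {S : Finset V}
    (h : S.Nonempty) : gnext G v S ∈ S := by
  rw [gnext, dif_pos h]
  exact (S.exists_max_image (G.dist v) h).choose_spec.1

lemma gnext_max {V : Type} [Fintype V] (G : SimpleGraph V) {v : V} {S : Finset V}
    (h : S.Nonempty) : ∀ w ∈ S, G.dist v w ≤ G.dist v (gnext G v S) := by
  rw [gnext, dif_pos h]
  exact (S.exists_max_image (G.dist v) h).choose_spec.2

noncomputable def gseq {V : Type} [Fintype V] (G : SimpleGraph V) (u : V) : ℕ → V × Finset V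
  | 0 => (u, Finset.univ.erase u)
  | (i+1) =>
      let p := gseq G u i
      let w := gnext G p.1 p.2
      (w, p.2.erase w)

section Greedy
variable {V : Type} [Fintype V] (G : SimpleGraph V) (u : V)

lemma gseq_snd_succ (i : ℕ) :
    (gseq G u (i+1)).2 = (gseq G u i).2.erase (gseq G u (i+1)).1 := rfl

lemma gseq_fst_mem {i : ℕ} (h : (gseq G u i).2.Nonempty) :
    (gseq G u (i+1)).1 ∈ (gseq G u i).2 := gnext_mem G h

lemma gseq_card {n : ℕ} (hcard : Fintype.card V = n + 1) :
    ∀ i, i ≤ n → (gseq G u i).2.card = n - i := by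
  intro i
  induction i with
  | zero => intro _; simp [gseq, Finset.card_erase_of_mem, hcard]
  | succ i ih =>
      intro hi
      have h1 := ih (by omega)
      have hne : (gseq G u i).2.Nonempty := by
        rw [← Finset.card_pos, h1]; omega
      rw [gseq_snd_succ, Finset.card_erase_of_mem (gseq_fst_mem G u hne), h1]
      omega

lemma gseq_snd_subset : ∀ {i j : ℕ}, i ≤ j → (gseq G u j).2 ⊆ (gseq G u i).2 := by
  intro i j hij
  induction j with
  | zero => have : i = 0 := by omega
            subst this; exact subset_rfl
  | succ j ih =>
      rcases Nat.eq_or_lt_of_le hij with h | h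
      · subst h; exact subset_rfl
      · exact (gseq_snd_succ G u j ▸ Finset.erase_subset _ _).trans (ih (by omega))

lemma gseq_fst_not_mem (i : ℕ) : (gseq G u i).1 ∉ (gseq G u i).2 := by
  cases i with
  | zero => exact Finset.notMem_erase _ _
  | succ i => rw [gseq_snd_succ]; exact Finset.notMem_erase _ _

lemma gseq_fst_mem_of_lt {n : ℕ} (hcard : Fintype.card V = n + 1) {i j : ℕ}
    (hij : i < j) (hj : j ≤ n) : (gseq G u j).1 ∈ (gseq G u i).2 := by
  obtain ⟨m, rfl⟩ : ∃ m, j = m + 1 := ⟨j - 1, by omega⟩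
  have hne : (gseq G u m).2.Nonempty := by
    rw [← Finset.card_pos, gseq_card G u hcard m (by omega)]; omega
  exact gseq_snd_subset G u (by omega : i ≤ m) (gseq_fst_mem G u hne)

lemma gseq_max {i : ℕ} (w : V) (hw : w ∈ (gseq G u i).2) :
    G.dist (gseq G u i).1 w ≤ G.dist (gseq G u i).1 (gseq G u (i+1)).1 :=
  gnext_max G ⟨w, hw⟩ w hw

end Greedy

set_option maxHeartbeats 1000000 in
lemma tlen_delete_lt {V : Type} (G : SimpleGraph V) {k : ℕ} (x : Fin (k + 2) → V)
    (i : Fin (k + 2)) (h0 : i ≠ 0) (hl : i ≠ Fin.last (k + 1))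
    (htri : ∀ a : ℕ, (ha : a + 2 ≤ k + 1) →
      G.dist (x ⟨a, by omega⟩) (x ⟨a + 2, by omega⟩) <
        G.dist (x ⟨a, by omega⟩) (x ⟨a + 1, by omega⟩) +
        G.dist (x ⟨a + 1, by omega⟩) (x ⟨a + 2, by omega⟩)) :
    tlen G (x ∘ i.succAbove) < tlen G x := by
  have hi0 : (i : ℕ) ≠ 0 := fun h => h0 (Fin.ext h)
  have hil : (i : ℕ) ≠ k + 1 := fun h => hl (Fin.ext h)
  have hilt := i.isLt
  obtain ⟨b, hb⟩ : ∃ b, (i : ℕ) = b + 1 := ⟨(i : ℕ) - 1, by omega⟩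
  obtain ⟨c, rfl⟩ : ∃ c, k = b + 1 + c := ⟨k - (b + 1), by omega⟩
  have hyval : ∀ (a : ℕ) (h : a < b + 1 + c + 1),
      (x ∘ i.succAbove) ⟨a, h⟩ =
        if a < b + 1 then x ⟨a, by omega⟩ else x ⟨a + 1, by omega⟩ := by
    intro a h
    by_cases hab : a < b + 1
    · rw [if_pos hab]
      show x (i.succAbove ⟨a, h⟩) = _
      rw [Fin.succAbove_of_castSucc_lt i ⟨a, h⟩ (Fin.lt_def.mpr (by show a < (i : ℕ); omega))]
      rfl
    · rw [if_neg hab]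
      show x (i.succAbove ⟨a, h⟩) = _
      rw [Fin.succAbove_of_le_castSucc i ⟨a, h⟩ (Fin.le_def.mpr (by show (i : ℕ) ≤ a; omega))]
      rfl
  have xE : ∀ (a a' : ℕ) (h : a < b + 1 + c + 2) (h' : a' < b + 1 + c + 2), a = a' →
      x ⟨a, h⟩ = x ⟨a', h'⟩ := by rintro a a' h h' rfl; rfl
  obtain ⟨f, hf⟩ : ∃ f : ℕ → ℕ, f = fun a =>
      if h : a + 1 < b + 1 + c + 2 then G.dist (x ⟨a, by omega⟩) (x ⟨a + 1, h⟩) else 0 := ⟨_, rfl⟩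
  obtain ⟨g, hg⟩ : ∃ g : ℕ → ℕ, g = fun a =>
      if h : a + 1 < b + 1 + c + 1 then
        G.dist ((x ∘ i.succAbove) ⟨a, by omega⟩) ((x ∘ i.succAbove) ⟨a + 1, h⟩) else 0 := ⟨_, rfl⟩
  have hfval : ∀ (a : ℕ) (h : a + 1 < b + 1 + c + 2),
      f a = G.dist (x ⟨a, by omega⟩) (x ⟨a + 1, h⟩) := by
    intro a h
    simp only [hf]
    split
    · rfl
    · omega
  have hgval : ∀ (a : ℕ) (h : a + 1 < b + 1 + c + 1),
      g a = G.dist ((x ∘ i.succAbove) ⟨a, by omega⟩) ((x ∘ i.succAbove) ⟨a + 1, h⟩) := by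
    intro a h
    simp only [hg]
    split
    · rfl
    · omega
  have e5 : g b < f b + f (b + 1) := by
    rw [hgval b (by omega), hfval b (by omega), hfval (b + 1) (by omega),
      hyval b, hyval (b + 1), if_pos (show b < b + 1 by omega),
      if_neg (show ¬ b + 1 < b + 1 by omega)]
    exact htri b (by omega)
  have hg_lt : ∀ a, a < b → g a = f a := by
    intro a ha
    rw [hgval a (by omega), hfval a (by omega), hyval a, hyval (a + 1),
      if_pos (show a < b + 1 by omega), if_pos (show a + 1 < b + 1 by omega)]
  have hg_ge : ∀ t, t < c → g (b + 1 + t) = f (b + 2 + t) := by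
    intro t ht
    rw [hgval (b + 1 + t) (by omega), hfval (b + 2 + t) (by omega),
      hyval (b + 1 + t), hyval (b + 1 + t + 1),
      if_neg (show ¬ b + 1 + t < b + 1 by omega),
      if_neg (show ¬ b + 1 + t + 1 < b + 1 by omega)]
    all_goals first | rfl | (congr 1 <;> exact xE _ _ _ _ (by omega))
  have hfx : tlen G x = ∑ a ∈ Finset.range (b + 1 + c + 1), f a := by
    rw [tlen, ← Fin.sum_univ_eq_sum_range]
    apply Finset.sum_congr rfl
    intro a _
    rw [hfval a (by omega)]
    rfl
  have hgy : tlen G (x ∘ i.succAbove) = ∑ a ∈ Finset.range (b + 1 + c), g a := by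
    rw [tlen, ← Fin.sum_univ_eq_sum_range]
    apply Finset.sum_congr rfl
    intro a _
    rw [hgval a (by omega)]
    rfl
  have e1 : ∑ a ∈ Finset.range (b + 1 + c + 1), f a =
      (∑ a ∈ Finset.range b, f a) + f b + f (b + 1) + ∑ t ∈ Finset.range c, f (b + 2 + t) := by
    rw [show b + 1 + c + 1 = b + 2 + c by omega, Finset.sum_range_add f (b + 2) c,
      Finset.sum_range_succ, Finset.sum_range_succ]
    try ring
  have e2 : ∑ a ∈ Finset.range (b + 1 + c), g a =
      (∑ a ∈ Finset.range b, g a) + g b + ∑ t ∈ Finset.range c, g (b + 1 + t) := by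
    rw [Finset.sum_range_add g (b + 1) c, Finset.sum_range_succ]
    try ring
  have e3 : ∑ a ∈ Finset.range b, g a = ∑ a ∈ Finset.range b, f a :=
    Finset.sum_congr rfl fun a ha => hg_lt a (Finset.mem_range.mp ha)
  have e4 : ∑ t ∈ Finset.range c, g (b + 1 + t) = ∑ t ∈ Finset.range c, f (b + 2 + t) :=
    Finset.sum_congr rfl fun t ht => hg_ge t (Finset.mem_range.mp ht)
  rw [hfx, hgy, e1, e2, e3, e4]
  clear hfx hgy e1 e2 e3 e4 hg_lt hg_ge hyval hgval hfval xE htri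
  omega


set_option maxHeartbeats 1000000 in
/-- a finite connected non-complete graph on `n+1 > 2` vertices carries a
tuple through all vertices, of length `ℓ > n`, satisfying strict triangle inequalities at
all interior vertices; it is a nonzero cycle in `EMC_{n,ℓ}(G)` and `EMH_{n,ℓ}(G) ≠ 0`. -/
theorem exists_long_cycle_of_not_complete {V : Type} [Fintype V] (G : SimpleGraph V)
    (n : ℕ) (hcard : Fintype.card V = n + 1) (hn : 2 < n + 1)
    (hconn : G.Connected)
    (hnc : ¬ ∀ x y : V, x ≠ y → G.Adj x y) :
    ∃ ℓ : ℕ, n < ℓ ∧ ∃ x : Fin (n + 1) → V, Function.Bijective x ∧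
      tlen G x = ℓ ∧
      (∀ i : ℕ, (hi : i + 2 ≤ n) →
        G.dist (x ⟨i, by omega⟩) (x ⟨i + 2, by omega⟩) <
          G.dist (x ⟨i, by omega⟩) (x ⟨i + 1, by omega⟩) +
          G.dist (x ⟨i + 1, by omega⟩) (x ⟨i + 2, by omega⟩)) ∧
      (∃ hx : x ∈ emcGen G n ℓ,
        Finsupp.single (⟨x, hx⟩ : emcGen G n ℓ) 1 ∈ emcCycles G n ℓ) ∧
      Nontrivial (EMH G n ℓ) := by
  obtain ⟨k, rfl⟩ : ∃ k, n = k + 1 := ⟨n - 1, by omega⟩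
  push_neg at hnc
  obtain ⟨u, z, huz, hadj⟩ := hnc
  set X : Fin (k + 1 + 1) → V := fun a => (gseq G u (a : ℕ)).1 with hXdef
  have key : ∀ p q : Fin (k + 1 + 1), p < q → X p ≠ X q := by
    intro p q hpq he
    have hm : X q ∈ (gseq G u (p : ℕ)).2 :=
      gseq_fst_mem_of_lt G u hcard (show (p : ℕ) < (q : ℕ) from hpq) (by omega)
    rw [← he] at hm
    exact gseq_fst_not_mem G u (p : ℕ) hm
  have hInj : Function.Injective X := by
    intro p q he
    rcases lt_trichotomy p q with h | h | h
    · exact absurd he (key p q h)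
    · exact h
    · exact absurd he.symm (key q p h)
  have hBij : Function.Bijective X :=
    (Fintype.bijective_iff_injective_and_card X).mpr ⟨hInj, by simp [hcard]⟩
  have hdpos : ∀ p q : Fin (k + 1 + 1), p ≠ q → 0 < G.dist (X p) (X q) :=
    fun p q h => hconn.pos_dist_of_ne (fun e => h (hInj e))
  have htri : ∀ a : ℕ, (ha : a + 2 ≤ k + 1) →
      G.dist (X ⟨a, by omega⟩) (X ⟨a + 2, by omega⟩) <
        G.dist (X ⟨a, by omega⟩) (X ⟨a + 1, by omega⟩) +
        G.dist (X ⟨a + 1, by omega⟩) (X ⟨a + 2, by omega⟩) := by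
    intro a ha
    have hm : (gseq G u (a + 2)).1 ∈ (gseq G u a).2 :=
      gseq_fst_mem_of_lt G u hcard (by omega : a < a + 2) (by omega)
    have h1 : G.dist (X ⟨a, by omega⟩) (X ⟨a + 2, by omega⟩) ≤
        G.dist (X ⟨a, by omega⟩) (X ⟨a + 1, by omega⟩) := gseq_max G u _ hm
    have h2 : 0 < G.dist (X ⟨a + 1, by omega⟩) (X ⟨a + 2, by omega⟩) :=
      hdpos _ _ (Fin.ne_of_val_ne (by omega : a + 1 ≠ a + 2))
    omega
  have hfirst : 2 ≤ G.dist (X ⟨0, by omega⟩) (X ⟨1, by omega⟩) := by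
    have hz : z ∈ (gseq G u 0).2 := by
      show z ∈ Finset.univ.erase u
      exact Finset.mem_erase.mpr ⟨fun e => huz e.symm, Finset.mem_univ z⟩
    have h1 : G.dist u z ≤ G.dist (X ⟨0, by omega⟩) (X ⟨1, by omega⟩) := gseq_max G u z hz
    have hd0 : 0 < G.dist u z := hconn.pos_dist_of_ne huz
    have hd1 : G.dist u z ≠ 1 := fun e => hadj (SimpleGraph.dist_eq_one_iff_adj.mp e)
    omega
  have hlen : k + 1 < tlen G X := by
    have h0 : (⟨0, by omega⟩ : Fin (k + 1)) ∈ (Finset.univ : Finset (Fin (k + 1))) :=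
      Finset.mem_univ _
    rw [tlen, ← Finset.add_sum_erase _ _ h0]
    have hrest := Finset.card_nsmul_le_sum
      (Finset.univ.erase (⟨0, by omega⟩ : Fin (k + 1)))
      (fun a => G.dist (X a.castSucc) (X a.succ)) 1
      (fun a _ => hdpos _ _ (Fin.castSucc_lt_succ (i := a)).ne)
    have hcarde : (Finset.univ.erase (⟨0, by omega⟩ : Fin (k + 1))).card = k := by
      rw [Finset.card_erase_of_mem h0, Finset.card_univ, Fintype.card_fin]
      omega
    rw [hcarde, smul_eq_mul, mul_one] at hrest
    have h2 : 2 ≤ G.dist (X ((⟨0, by omega⟩ : Fin (k + 1)).castSucc))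
        (X ((⟨0, by omega⟩ : Fin (k + 1)).succ)) := hfirst
    omega
  have hx : X ∈ emcGen G (k + 1) (tlen G X) :=
    ⟨hInj, fun a => hconn.preconnected _ _, rfl⟩
  have hface0 : ∀ i : Fin (k + 2), i ≠ 0 → i ≠ Fin.last (k + 1) →
      emcFace G k (tlen G X) i ⟨X, hx⟩ = 0 := by
    intro i h0 hl
    rw [emcFace, dif_neg]
    rintro ⟨-, -, hlen'⟩
    exact (ne_of_lt (tlen_delete_lt G X i h0 hl htri)) hlen'
  have hcyc : Finsupp.single (⟨X, hx⟩ : emcGen G (k + 1) (tlen G X)) 1 ∈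
      emcCycles G (k + 1) (tlen G X) := by
    show _ ∈ LinearMap.ker (emcD G k (tlen G X))
    rw [LinearMap.mem_ker, emcD, Finsupp.lift_apply,
      Finsupp.sum_single_index (by rw [zero_smul]), one_smul]
    apply Finset.sum_eq_zero
    intro i _
    by_cases hc : i = 0 ∨ i = Fin.last (k + 1)
    · rw [if_pos hc]
    · push_neg at hc
      rw [if_neg (not_or.mpr hc), hface0 i hc.1 hc.2, smul_zero]
  refine ⟨tlen G X, hlen, X, hBij, rfl, htri, ⟨hx, hcyc⟩, ?_⟩
  have hempty : IsEmpty (emcGen G (k + 1 + 1) (tlen G X)) := by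
    constructor
    intro w
    have hc2 : Fintype.card (Fin (k + 1 + 1 + 1)) ≤ Fintype.card V :=
      Fintype.card_le_of_injective _ w.2.1
    rw [Fintype.card_fin, hcard] at hc2
    omega
  have hbot : Submodule.comap (emcCycles G (k + 1) (tlen G X)).subtype
      (LinearMap.range (emcD G (k + 1) (tlen G X))) = ⊥ := by
    rw [Submodule.eq_bot_iff]
    intro w hw
    obtain ⟨v, hv⟩ := Submodule.mem_comap.mp hw
    have hv0 : v = 0 := Finsupp.ext fun a => (hempty.false a).elim
    rw [hv0, map_zero] at hv
    exact Subtype.ext hv.symm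
  have hnt : Nontrivial ↥(emcCycles G (k + 1) (tlen G X)) := by
    refine ⟨⟨_, hcyc⟩, 0, fun e => ?_⟩
    have := Subtype.ext_iff.mp e
    exact one_ne_zero (Finsupp.single_eq_zero.mp this)
  refine Submodule.Quotient.nontrivial_iff.mpr (ne_of_lt ?_)
  rw [hbot]
  refine lt_of_le_of_ne bot_le fun h => ?_
  obtain ⟨a, b, hab⟩ := hnt
  have ha : a ∈ (⊥ : Submodule ℤ _) := h.symm ▸ Submodule.mem_top
  have hb : b ∈ (⊥ : Submodule ℤ _) := h.symm ▸ Submodule.mem_top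
  rw [Submodule.mem_bot] at ha hb
  exact hab (ha.trans hb.symm)
end

section
/- For the complete undirected graph K_n on n ≥ 1 vertices, the rank of EMH_{k,k}(K_n) equals n!/(n-(k+1))! for every k < n, and EMH_{k,ℓ}(K_n) = 0 for all k ≠ ℓ. -/
open scoped Classical

section CompleteGraph

variable {V : Type}

lemma top_adj_castSucc_succ_of_injective {k : ℕ} {x : Fin (k + 1) → V}
    (hx : Function.Injective x) (i : Fin k) : (⊤ : SimpleGraph V).Adj (x i.castSucc) (x i.succ) :=
  fun h => Fin.castSucc_lt_succ.ne (hx h)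

lemma tlen_top_of_injective {k : ℕ} {x : Fin (k + 1) → V} (hx : Function.Injective x) :
    tlen (⊤ : SimpleGraph V) x = k := by
  have hdist : ∀ i : Fin k, (⊤ : SimpleGraph V).dist (x i.castSucc) (x i.succ) = 1 := fun i =>
    SimpleGraph.dist_eq_one_iff_adj.mpr (top_adj_castSucc_succ_of_injective hx i)
  simp only [tlen, hdist, Finset.sum_const, Finset.card_univ, Fintype.card_fin, smul_eq_mul,
    mul_one]

lemma mem_emcGen_top_iff {k ℓ : ℕ} (x : Fin (k + 1) → V) :
    x ∈ emcGen (⊤ : SimpleGraph V) k ℓ ↔ Function.Injective x ∧ k = ℓ := by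
  constructor
  · rintro ⟨hx, -, hlen⟩
    exact ⟨hx, (tlen_top_of_injective hx).symm.trans hlen⟩
  · rintro ⟨hx, rfl⟩
    exact ⟨hx, fun i => (top_adj_castSucc_succ_of_injective hx i).reachable,
      tlen_top_of_injective hx⟩

lemma isEmpty_emcGen_top_of_ne {k ℓ : ℕ} (h : k ≠ ℓ) :
    IsEmpty (emcGen (⊤ : SimpleGraph V) k ℓ) :=
  ⟨fun ⟨x, hx⟩ => h ((mem_emcGen_top_iff x).mp hx).2⟩

noncomputable def emcGenTopEquivEmbedding (k : ℕ) :
    emcGen (⊤ : SimpleGraph V) k k ≃ (Fin (k + 1) ↪ V) :=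
  (Equiv.subtypeEquivRight fun x => by simp [mem_emcGen_top_iff]).trans
    (Equiv.subtypeInjectiveEquivEmbedding _ _)

lemma emcFace_top {k ℓ : ℕ} (i : Fin (k + 2)) (x : emcGen (⊤ : SimpleGraph V) (k + 1) ℓ) :
    emcFace (⊤ : SimpleGraph V) k ℓ i x = 0 := by
  refine dif_neg fun h => ?_
  have hface := ((mem_emcGen_top_iff _).mp h).2
  have hx := ((mem_emcGen_top_iff _).mp x.2).2
  omega

lemma emcD_top (k ℓ : ℕ) : emcD (⊤ : SimpleGraph V) k ℓ = 0 := by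
  ext x
  simp [emcD, emcFace_top]

lemma emcCycles_top (k ℓ : ℕ) : emcCycles (⊤ : SimpleGraph V) k ℓ = ⊤ := by
  cases k with
  | zero => rfl
  | succ k => rw [emcCycles, emcD_top, LinearMap.ker_zero]

noncomputable def emhTopEquivEMC (k ℓ : ℕ) :
    EMH (⊤ : SimpleGraph V) k ℓ ≃ₗ[ℤ] EMC (⊤ : SimpleGraph V) k ℓ :=
  (Submodule.quotEquivOfEqBot _ (by
      rw [emcD_top, LinearMap.range_zero, Submodule.comap_bot, Submodule.ker_subtype])).trans
    ((LinearEquiv.ofEq _ _ (emcCycles_top k ℓ)).trans Submodule.topEquiv)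

end CompleteGraph

theorem emh_complete_graph_general (n : ℕ) :
    (∀ k : ℕ, k < n →
      Module.finrank ℤ (EMH (⊤ : SimpleGraph (Fin n)) k k) =
        n.factorial / (n - (k + 1)).factorial) ∧
    (∀ k ℓ : ℕ, k ≠ ℓ → Subsingleton (EMH (⊤ : SimpleGraph (Fin n)) k ℓ)) := by
  refine ⟨fun k hk => ?_, fun k ℓ hkℓ => ?_⟩
  · have := Fintype.ofFinite (emcGen (⊤ : SimpleGraph (Fin n)) k k)
    rw [(emhTopEquivEMC k k).finrank_eq, Module.finrank_finsupp_self,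
      Fintype.card_congr (emcGenTopEquivEmbedding k), Fintype.card_embedding_eq,
      Fintype.card_fin, Fintype.card_fin, Nat.descFactorial_eq_div hk]
  · have := isEmpty_emcGen_top_of_ne (V := Fin n) hkℓ
    exact (emhTopEquivEMC k ℓ).toEquiv.subsingleton

/-- eulerian magnitude homology of the complete graph `K_n`, `n ≥ 1`:
rank `n!/(n-(k+1))!` in bidegree `(k,k)` for `k < n`, and zero off the diagonal. -/
theorem emh_complete_graph (n : ℕ) (hn : 1 ≤ n) :
    (∀ k : ℕ, k < n →
      Module.finrank ℤ (EMH (⊤ : SimpleGraph (Fin n)) k k) =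
        n.factorial / (n - (k + 1)).factorial) ∧
    (∀ k ℓ : ℕ, k ≠ ℓ → Subsingleton (EMH (⊤ : SimpleGraph (Fin n)) k ℓ)) :=
  emh_complete_graph_general n
end
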